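/- arXiv:1608.07495 — 4 statements merged into one kernel-verified Lean document; each statement's English description precedes it below -/
import Mathlib

section
/- For a bounded operator T: c₀ → X, χ(T*) ≤ 2·SS_{c₀}(T), where χ(T*) is the Hausdorff measure of noncompactness of T*(B_{X*}) and SS_{c₀}(T) = sup{ (‖R‖·‖(TR)^{-1}‖)^{-1} : R: c₀ → c₀ bounded such that TR is an isomorphism onto its range }. -/
/-
Let `Qₙ` be the projection of `c₀` killing the first `n` coordinates and `m(T) = infₙ ‖T Qₙ‖`.
Since `T - T Qₙ` has finite rank, `T*(B_{X*})` lies within `‖T Qₙ‖` of a totally bounded set,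
so `χ(T*) ≤ m(T)`. Conversely, fix `n₀` with `‖T Q_{n₀}‖ < m(T) + ε` and pick successive
disjointly supported blocks `vₖ` beyond `n₀` with `‖vₖ‖ ≤ 1` and `‖T vₖ‖ > m(T) - ε`.
Then `R a = ∑ aₖ vₖ` has `‖R‖ ≤ 1`, and comparing `a` with `a` whose `k`-th coordinate has its
sign flipped gives `2 |aₖ| (m(T) - ε) ≤ ‖T R a‖ + (m(T) + ε) ‖a‖`; taking the supremum over `k`,
`‖T R a‖ ≥ (m(T) - 3ε) ‖a‖`. Hence `χ(T*) ≤ m(T) ≤ SS_{c₀}(T)`.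
-/

open NormedSpace Metric Set Filter
open scoped ENNReal

noncomputable section

/-- Hausdorff measure of noncompactness of a set. -/
def hchi {Y : Type*} [SeminormedAddCommGroup Y] (A : Set Y) : ℝ :=
  sInf { r : ℝ | ∃ F : Finset Y, ∀ a ∈ A, ∃ y ∈ F, dist a y ≤ r }

variable {X Y Z : Type*} [NormedAddCommGroup X] [NormedSpace ℝ X]
  [NormedAddCommGroup Y] [NormedSpace ℝ Y]

/-- χ(T) = Hausdorff measure of noncompactness of T(B_X). -/
def chiOp (T : X →L[ℝ] Y) : ℝ := hchi (T '' closedBall 0 1)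

/-- SS(T): the quantity measuring strict singularity. -/
def SS (T : X →L[ℝ] Y) : ℝ :=
  sSup { c : ℝ | ∃ M : Submodule ℝ X, IsClosed (M : Set X) ∧ ¬ FiniteDimensional ℝ M ∧
      c = sInf { r : ℝ | ∃ x ∈ M, ‖x‖ = 1 ∧ r = ‖T x‖ } }

/-- SS_Z(T): the quantity measuring Z-strict singularity. -/
def SSZ (Z : Type*) [NormedAddCommGroup Z] [NormedSpace ℝ Z] (T : X →L[ℝ] Y) : ℝ :=
  sSup { r : ℝ | ∃ R : Z →L[ℝ] X, ∃ c : ℝ, 0 < c ∧ (∀ z, c * ‖z‖ ≤ ‖T (R z)‖) ∧ r = c / ‖R‖ }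

/-- The adjoint (dual) operator T* : Y* → X*. -/
def adjOp (T : X →L[ℝ] Y) : StrongDual ℝ Y →L[ℝ] StrongDual ℝ X :=
  (ContinuousLinearMap.compL ℝ X Y ℝ).flip T

/-- δ(S) for a (surjective) map S: the supremum of δ > 0 with δ·B ⊆ S(B). -/
def deltaQ {W : Type*} [SeminormedAddCommGroup W] (S : X → W) : ℝ :=
  sSup { d : ℝ | 0 < d ∧ ∀ w : W, ‖w‖ ≤ d → ∃ x : X, ‖x‖ ≤ 1 ∧ S x = w }

/-- SCS(T): the quantity measuring strict cosingularity. -/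
def SCS (T : X →L[ℝ] Y) : ℝ :=
  sSup { r : ℝ | ∃ N : Submodule ℝ Y, IsClosed (N : Set Y) ∧ ¬ FiniteDimensional ℝ (Y ⧸ N) ∧
      Function.Surjective (fun x : X => (Submodule.Quotient.mk (T x) : Y ⧸ N)) ∧
      r = deltaQ (fun x : X => (Submodule.Quotient.mk (T x) : Y ⧸ N)) }

/-- SCS_Z(T): the quantity measuring Z-strict cosingularity. -/
def SCSZ (Z : Type*) [NormedAddCommGroup Z] [NormedSpace ℝ Z] (T : X →L[ℝ] Y) : ℝ :=
  sSup { r : ℝ | ∃ S : Y →L[ℝ] Z, Function.Surjective (fun x : X => S (T x)) ∧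
      r = deltaQ (fun x : X => S (T x)) / ‖S‖ }

/-- The annihilator M^⊥ in the continuous dual. -/
def annih (M : Submodule ℝ X) : Submodule ℝ (StrongDual ℝ X) where
  carrier := { f | ∀ x ∈ M, f x = 0 }
  add_mem' := by intro f g hf hg x hx; simp [hf x hx, hg x hx]
  zero_mem' := by intro x _; simp
  smul_mem' := by intro c f hf x hx; simp [hf x hx]

/-- The quantity wk_Z(A) measuring weak non-compactness. -/
def wkk (Z : Type*) [NormedAddCommGroup Z] [NormedSpace ℝ Z] (A : Set Z) : ℝ :=
  sSup { r : ℝ | ∃ φ : StrongDual ℝ (StrongDual ℝ Z),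
      StrongDual.toWeakDual φ ∈ closure (StrongDual.toWeakDual '' (inclusionInDoubleDual ℝ Z '' A)) ∧
      r = Metric.infDist φ (Set.range (inclusionInDoubleDual ℝ Z)) }

/-- A Banach space is λ-subprojective. -/
def Subprojective (lam : ℝ) (Y : Type*) [NormedAddCommGroup Y] [NormedSpace ℝ Y] : Prop :=
  ∀ M : Submodule ℝ Y, IsClosed (M : Set Y) → ¬ FiniteDimensional ℝ M →
    ∃ N : Submodule ℝ Y, N ≤ M ∧ IsClosed (N : Set Y) ∧ ¬ FiniteDimensional ℝ N ∧
      ∃ P : Y →L[ℝ] Y, ‖P‖ ≤ lam ∧ LinearMap.range (P : Y →ₗ[ℝ] Y) = N ∧ ∀ y, P (P y) = P y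

/-- A Banach space is λ-superprojective. -/
def Superprojective (lam : ℝ) (Y : Type*) [NormedAddCommGroup Y] [NormedSpace ℝ Y] : Prop :=
  ∀ M : Submodule ℝ Y, IsClosed (M : Set Y) → ¬ FiniteDimensional ℝ (Y ⧸ M) →
    ∃ N : Submodule ℝ Y, M ≤ N ∧ IsClosed (N : Set Y) ∧ ¬ FiniteDimensional ℝ (Y ⧸ N) ∧
      ∃ P : Y →L[ℝ] Y, ‖P‖ ≤ lam ∧ LinearMap.range (P : Y →ₗ[ℝ] Y) = N ∧ ∀ y, P (P y) = P y

end

open scoped ZeroAtInfty Topology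

noncomputable section

section General

variable {E F Z : Type*} [NormedAddCommGroup E] [NormedSpace ℝ E]
  [NormedAddCommGroup F] [NormedSpace ℝ F] [NormedAddCommGroup Z] [NormedSpace ℝ Z]

theorem hchi_le_of_totallyBounded {Y : Type*} [SeminormedAddCommGroup Y] {A B : Set Y} {r : ℝ}
    (hA : A.Nonempty) (hB : TotallyBounded B) (h : ∀ a ∈ A, ∃ b ∈ B, dist a b ≤ r) :
    hchi A ≤ r := by
  obtain ⟨a₀, ha₀⟩ := hA
  have hbdd : BddBelow {r : ℝ | ∃ F : Finset Y, ∀ a ∈ A, ∃ y ∈ F, dist a y ≤ r} := by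
    refine ⟨0, fun s ⟨F, hF⟩ => ?_⟩
    obtain ⟨y, -, hy⟩ := hF a₀ ha₀
    exact dist_nonneg.trans hy
  refine le_of_forall_pos_le_add fun ε hε => csInf_le hbdd ?_
  obtain ⟨t, ht, hBt⟩ := Metric.totallyBounded_iff.mp hB ε hε
  refine ⟨ht.toFinset, fun a ha => ?_⟩
  obtain ⟨b, hb, hab⟩ := h a ha
  obtain ⟨y, hy, hby⟩ := Set.mem_iUnion₂.mp (hBt hb)
  exact ⟨y, ht.mem_toFinset.mpr hy,
    (dist_triangle a b y).trans (add_le_add hab (Metric.mem_ball.mp hby).le)⟩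

theorem adjOp_sub_apply (T K : E →L[ℝ] F) (f : StrongDual ℝ F) :
    adjOp (T - K) f = adjOp T f - adjOp K f :=
  f.comp_sub T K

theorem norm_adjOp_apply_le (T : E →L[ℝ] F) (f : StrongDual ℝ F) :
    ‖adjOp T f‖ ≤ ‖f‖ * ‖T‖ :=
  f.opNorm_comp_le T

theorem totallyBounded_adjOp_image {G : Type*} [NormedAddCommGroup G] [NormedSpace ℝ G]
    [FiniteDimensional ℝ G] (P : E →L[ℝ] G) {S : Set (StrongDual ℝ G)}
    (hS : Bornology.IsBounded S) : TotallyBounded (adjOp P '' S) := by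
  have := FiniteDimensional.proper_real (StrongDual ℝ G)
  exact (hS.isCompact_closure.image (adjOp P).continuous).totallyBounded.subset
    (Set.image_mono subset_closure)

theorem chiOp_adjOp_le_norm_sub_comp {G : Type*} [NormedAddCommGroup G] [NormedSpace ℝ G]
    [FiniteDimensional ℝ G] (T : E →L[ℝ] F) (J : G →L[ℝ] F) (P : E →L[ℝ] G) :
    chiOp (adjOp T) ≤ ‖T - J.comp P‖ := by
  have hJ : Bornology.IsBounded (adjOp J '' Metric.closedBall 0 1) :=
    (adjOp J).lipschitz.isBounded_image Metric.isBounded_closedBall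
  refine hchi_le_of_totallyBounded ⟨0, 0, by simp⟩ (totallyBounded_adjOp_image P hJ) ?_
  rintro _ ⟨f, hf, rfl⟩
  refine ⟨adjOp (J.comp P) f, ⟨adjOp J f, ⟨f, hf, rfl⟩, rfl⟩, ?_⟩
  rw [dist_eq_norm, ← adjOp_sub_apply]
  rw [mem_closedBall_zero_iff] at hf
  calc ‖adjOp (T - J.comp P) f‖ ≤ ‖f‖ * ‖T - J.comp P‖ := norm_adjOp_apply_le _ _
    _ ≤ ‖T - J.comp P‖ := mul_le_of_le_one_left (norm_nonneg _) hf

theorem SSZ_nonneg (T : E →L[ℝ] F) : 0 ≤ SSZ Z T :=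
  Real.sSup_nonneg fun _ ⟨_, _, hc, _, hr⟩ => hr ▸ div_nonneg hc.le (norm_nonneg _)

theorem le_opNorm_mul_opNorm_of_forall_le {T : E →L[ℝ] F} {R : Z →L[ℝ] E} {c : ℝ}
    [Nontrivial Z] (h : ∀ z, c * ‖z‖ ≤ ‖T (R z)‖) : c ≤ ‖T‖ * ‖R‖ := by
  obtain ⟨z, hz⟩ := exists_ne (0 : Z)
  have hz' : 0 < ‖z‖ := norm_pos_iff.mpr hz
  refine le_of_mul_le_mul_right ?_ hz'
  calc c * ‖z‖ ≤ ‖(T.comp R) z‖ := h z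
    _ ≤ ‖T.comp R‖ * ‖z‖ := (T.comp R).le_opNorm z
    _ ≤ ‖T‖ * ‖R‖ * ‖z‖ := by gcongr; exact T.opNorm_comp_le R

theorem le_SSZ_of_norm_le_one [Nontrivial Z] {T : E →L[ℝ] F} (R : Z →L[ℝ] E) (hR : ‖R‖ ≤ 1)
    {c : ℝ} (hc : 0 < c) (h : ∀ z, c * ‖z‖ ≤ ‖T (R z)‖) : c ≤ SSZ Z T := by
  have hbdd : BddAbove {r : ℝ | ∃ R : Z →L[ℝ] E, ∃ c : ℝ, 0 < c ∧
      (∀ z, c * ‖z‖ ≤ ‖T (R z)‖) ∧ r = c / ‖R‖} := by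
    refine ⟨‖T‖, fun _ ⟨R', c', _, h', hr⟩ => hr ▸ ?_⟩
    exact div_le_of_le_mul₀ (norm_nonneg _) (norm_nonneg _) (le_opNorm_mul_opNorm_of_forall_le h')
  have hRpos : 0 < ‖R‖ := by
    by_contra! h0
    have := le_opNorm_mul_opNorm_of_forall_le h
    nlinarith [norm_nonneg R, norm_nonneg T]
  exact (le_div_self hc.le hRpos hR).trans (le_csSup hbdd ⟨R, c, hc, h, rfl⟩)

end General

section BlockIndex

def blockIndex (N : ℕ → ℕ) (j : ℕ) : ℕ :=
  Nat.findGreatest (fun k => N k ≤ j) j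

variable {N : ℕ → ℕ}

theorem le_blockIndex (hN : StrictMono N) {k j : ℕ} (h : N k ≤ j) : k ≤ blockIndex N j :=
  Nat.le_findGreatest (hN.le_apply.trans h) h

theorem blockIndex_eq (hN : StrictMono N) {k j : ℕ} (h₁ : N k ≤ j) (h₂ : j < N (k + 1)) :
    blockIndex N j = k := by
  refine le_antisymm ?_ (le_blockIndex hN h₁)
  by_contra! hlt
  have h₃ : N (blockIndex N j) ≤ j :=
    Nat.findGreatest_spec (P := fun k => N k ≤ j) (hN.le_apply.trans h₁) h₁
  have h₄ : N (k + 1) ≤ N (blockIndex N j) := hN.monotone hlt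
  omega

theorem tendsto_blockIndex (hN : StrictMono N) : Tendsto (blockIndex N) atTop atTop :=
  tendsto_atTop_atTop.2 fun k => ⟨N k, fun _ hj => le_blockIndex hN hj⟩

end BlockIndex

namespace ZeroAtInftyContinuousMap

section Norm

variable {α β : Type*} [TopologicalSpace α] [SeminormedAddCommGroup β]

theorem norm_apply_le (f : C₀(α, β)) (x : α) : ‖f x‖ ≤ ‖f‖ :=
  f.toBCF.norm_coe_le_norm x

theorem norm_le_of_forall_le {f : C₀(α, β)} {C : ℝ} (hC : 0 ≤ C) (h : ∀ x, ‖f x‖ ≤ C) :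
    ‖f‖ ≤ C :=
  (f.toBCF.norm_le hC).2 h

theorem norm_eq_iSup_norm (f : C₀(α, β)) : ‖f‖ = ⨆ x, ‖f x‖ :=
  f.toBCF.norm_eq_iSup_norm

end Norm

theorem tendsto_atTop {β : Type*} [Zero β] [TopologicalSpace β] (f : C₀(ℕ, β)) :
    Tendsto f atTop (𝓝 0) := by
  simpa [cocompact_eq_atTop] using f.zero_at_infty'

def ofTendsto {β : Type*} [Zero β] [TopologicalSpace β] (f : ℕ → β)
    (hf : Tendsto f atTop (𝓝 0)) : C₀(ℕ, β) :=
  ⟨⟨f, continuous_of_discreteTopology⟩, by rwa [cocompact_eq_atTop]⟩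

@[simp]
theorem ofTendsto_apply {β : Type*} [Zero β] [TopologicalSpace β] (f : ℕ → β)
    (hf : Tendsto f atTop (𝓝 0)) (j : ℕ) : ofTendsto f hf j = f j :=
  rfl

def single (i : ℕ) : C₀(ℕ, ℝ) :=
  ofTendsto (fun j => if j = i then 1 else 0) <| tendsto_const_nhds.congr' <|
    (eventually_gt_atTop i).mono fun _ hj => by simp [hj.ne']

theorem single_apply (i j : ℕ) : single i j = if j = i then 1 else 0 :=
  rfl

instance : Nontrivial C₀(ℕ, ℝ) :=
  ⟨single 0, 0, fun h => by simpa [single_apply] using DFunLike.congr_fun h 0⟩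

def tail (n : ℕ) : C₀(ℕ, ℝ) →L[ℝ] C₀(ℕ, ℝ) :=
  LinearMap.mkContinuous
    { toFun := fun f => ofTendsto (fun j => if j < n then 0 else f j) <|
        f.tendsto_atTop.congr' <| (eventually_ge_atTop n).mono fun j hj => by simp [hj.not_gt]
      map_add' := fun f g => by
        ext j; simp only [ofTendsto_apply, coe_add, Pi.add_apply]; split_ifs <;> simp
      map_smul' := fun c f => by
        ext j; simp only [ofTendsto_apply, coe_smul, Pi.smul_apply]; split_ifs <;> simp }
    1 fun f => by
      rw [one_mul]
      refine norm_le_of_forall_le (norm_nonneg f) fun j => ?_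
      dsimp only [LinearMap.coe_mk, AddHom.coe_mk, ofTendsto_apply]
      split_ifs
      · simp
      · exact f.norm_apply_le j

theorem tail_apply (n : ℕ) (f : C₀(ℕ, ℝ)) (j : ℕ) : tail n f j = if j < n then 0 else f j :=
  rfl

theorem norm_tail_le (n : ℕ) : ‖tail n‖ ≤ 1 :=
  LinearMap.mkContinuous_norm_le _ zero_le_one _

theorem norm_tail_apply_le (n : ℕ) (f : C₀(ℕ, ℝ)) : ‖tail n f‖ ≤ ‖f‖ :=
  ((tail n).le_opNorm f).trans (mul_le_of_le_one_left (norm_nonneg f) (norm_tail_le n))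

theorem tendsto_tail_atTop (f : C₀(ℕ, ℝ)) : Tendsto (fun n => tail n f) atTop (𝓝 0) := by
  refine Metric.tendsto_atTop.2 fun ε hε => ?_
  obtain ⟨N, hN⟩ := Metric.tendsto_atTop.1 f.tendsto_atTop (ε / 2) (half_pos hε)
  refine ⟨N, fun n hn => ?_⟩
  rw [dist_zero_right]
  refine (norm_le_of_forall_le (half_pos hε).le fun j => ?_).trans_lt (half_lt_self hε)
  rw [tail_apply]
  split_ifs with hj
  · simpa using (half_pos hε).le
  · simpa using (hN j (hn.trans (not_lt.1 hj))).le

theorem sub_tail_apply (n : ℕ) (f : C₀(ℕ, ℝ)) (j : ℕ) :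
    (f - tail n f) j = if j < n then f j else 0 := by
  rw [coe_sub, Pi.sub_apply, tail_apply]
  split_ifs <;> simp

theorem norm_sub_tail_le (n : ℕ) (f : C₀(ℕ, ℝ)) : ‖f - tail n f‖ ≤ ‖f‖ :=
  norm_le_of_forall_le (norm_nonneg f) fun j => by
    rw [sub_tail_apply]
    split_ifs
    · exact f.norm_apply_le j
    · simp

def truncFin (n : ℕ) : C₀(ℕ, ℝ) →L[ℝ] (Fin n → ℝ) :=
  LinearMap.mkContinuous
    { toFun := fun f i => f i
      map_add' := fun _ _ => rfl
      map_smul' := fun _ _ => rfl }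
    1 fun f => by
      rw [one_mul]
      exact pi_norm_le_iff_of_nonneg (norm_nonneg f) |>.2 fun i => f.norm_apply_le i

def extendFin (n : ℕ) : (Fin n → ℝ) →L[ℝ] C₀(ℕ, ℝ) :=
  LinearMap.toContinuousLinearMap
    { toFun := fun c => ofTendsto (fun j => if h : j < n then c ⟨j, h⟩ else 0) <|
        tendsto_const_nhds.congr' <| (eventually_ge_atTop n).mono fun j hj => by simp [hj.not_gt]
      map_add' := fun c d => by
        ext j; simp only [ofTendsto_apply, coe_add, Pi.add_apply]; split_ifs <;> simp
      map_smul' := fun a c => by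
        ext j; simp only [ofTendsto_apply, coe_smul, Pi.smul_apply]; split_ifs <;> simp }

theorem extendFin_apply (n : ℕ) (c : Fin n → ℝ) (j : ℕ) :
    extendFin n c j = if h : j < n then c ⟨j, h⟩ else 0 :=
  rfl

theorem extendFin_comp_truncFin (n : ℕ) : (extendFin n).comp (truncFin n) = 1 - tail n := by
  ext f j
  simp only [ContinuousLinearMap.comp_apply, extendFin_apply, _root_.sub_apply,
    one_apply_eq_self, coe_sub, Pi.sub_apply, tail_apply]
  split_ifs <;> simp [truncFin]

theorem norm_mul_apply_le {v : C₀(ℕ, ℝ)} (hv : ‖v‖ ≤ 1) (c : ℝ) (j : ℕ) : ‖c * v j‖ ≤ ‖c‖ := by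
  rw [norm_mul]
  exact mul_le_of_le_one_right (norm_nonneg c) ((v.norm_apply_le j).trans hv)

/-- The operator `a ↦ ∑ₖ aₖ vₖ` for vectors `vₖ` supported on the fibres `g⁻¹' {k}`. -/
def blockOp (g : ℕ → ℕ) (hg : Tendsto g atTop atTop) (v : ℕ → C₀(ℕ, ℝ))
    (hv : ∀ k, ‖v k‖ ≤ 1) : C₀(ℕ, ℝ) →L[ℝ] C₀(ℕ, ℝ) :=
  LinearMap.mkContinuous
    { toFun := fun a => ofTendsto (fun j => a (g j) * v (g j) j) <| by
        refine squeeze_zero_norm (fun j => norm_mul_apply_le (hv (g j)) _ j) ?_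
        simpa using ((a.tendsto_atTop).comp hg).norm
      map_add' := fun a b => by ext j; simp [add_mul]
      map_smul' := fun c a => by ext j; simp [mul_assoc] }
    1 fun a => by
      rw [one_mul]
      exact norm_le_of_forall_le (norm_nonneg a) fun j =>
        (norm_mul_apply_le (hv (g j)) _ j).trans (a.norm_apply_le (g j))

variable {g : ℕ → ℕ} {hg : Tendsto g atTop atTop} {v : ℕ → C₀(ℕ, ℝ)} {hv : ∀ k, ‖v k‖ ≤ 1}

theorem blockOp_apply (a : C₀(ℕ, ℝ)) (j : ℕ) : blockOp g hg v hv a j = a (g j) * v (g j) j :=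
  rfl

theorem norm_blockOp_le : ‖blockOp g hg v hv‖ ≤ 1 :=
  LinearMap.mkContinuous_norm_le _ zero_le_one _

theorem blockOp_single (hsupp : ∀ k j, g j ≠ k → v k j = 0) (k : ℕ) :
    blockOp g hg v hv (single k) = v k := by
  ext j
  rw [blockOp_apply, single_apply]
  split_ifs with h
  · rw [h, one_mul]
  · rw [zero_mul, hsupp k j h]

end ZeroAtInftyContinuousMap

open ZeroAtInftyContinuousMap

section Operator

variable {X : Type*} [NormedAddCommGroup X] [NormedSpace ℝ X]

theorem chiOp_adjOp_le_norm_comp_tail (T : C₀(ℕ, ℝ) →L[ℝ] X) (n : ℕ) :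
    chiOp (adjOp T) ≤ ‖T.comp (tail n)‖ := by
  have h : T - (T.comp (extendFin n)).comp (truncFin n) = T.comp (tail n) := by
    rw [ContinuousLinearMap.comp_assoc, extendFin_comp_truncFin, ContinuousLinearMap.comp_sub,
      ContinuousLinearMap.one_def, ContinuousLinearMap.comp_id]
    exact sub_sub_cancel T _
  simpa only [h] using chiOp_adjOp_le_norm_sub_comp T (T.comp (extendFin n)) (truncFin n)

theorem le_norm_apply_of_le_norm_single (S : C₀(ℕ, ℝ) →L[ℝ] X) {α β : ℝ} (hα₀ : 0 ≤ α)
    (hα : ∀ k, α ≤ ‖S (single k)‖) (hβ : ‖S‖ ≤ β) (a : C₀(ℕ, ℝ)) :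
    (2 * α - β) * ‖a‖ ≤ ‖S a‖ := by
  have hflip : ∀ k, 2 * α * ‖a k‖ ≤ ‖S a‖ + β * ‖a‖ := by
    intro k
    -- `b` is `a` with the sign of its `k`-th coordinate flipped
    set b := a - (2 * a k) • single k
    have hb : ‖b‖ ≤ ‖a‖ := norm_le_of_forall_le (norm_nonneg a) fun j => by
      by_cases hj : j = k
      · subst hj
        simpa [b, single_apply, show a j - 2 * a j = -a j by ring] using a.norm_apply_le j
      · simpa [b, single_apply, hj] using a.norm_apply_le j
    calc 2 * α * ‖a k‖ ≤ ‖(2 * a k) • S (single k)‖ := by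
          rw [norm_smul, norm_mul, Real.norm_two, mul_right_comm]
          exact mul_le_mul_of_nonneg_left (hα k) (by positivity)
      _ = ‖S a - S b‖ := by rw [← map_sub, sub_sub_cancel, map_smul]
      _ ≤ ‖S a‖ + ‖S b‖ := norm_sub_le _ _
      _ ≤ ‖S a‖ + β * ‖a‖ := by
          gcongr
          exact (S.le_opNorm b).trans (mul_le_mul hβ hb (norm_nonneg b)
            ((norm_nonneg S).trans hβ))
  have hsup : 2 * α * ‖a‖ ≤ ‖S a‖ + β * ‖a‖ :=
    calc 2 * α * ‖a‖ = ⨆ k, 2 * α * ‖a k‖ := by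
          rw [norm_eq_iSup_norm, Real.mul_iSup_of_nonneg (by positivity)]
      _ ≤ ‖S a‖ + β * ‖a‖ := ciSup_le hflip
  linarith

theorem exists_block_of_le_norm_comp_tail {T : C₀(ℕ, ℝ) →L[ℝ] X} {t ε : ℝ}
    (ht : ∀ k, t ≤ ‖T.comp (tail k)‖) (hε : 0 < ε) (n : ℕ) :
    ∃ m, n < m ∧ ∃ u : C₀(ℕ, ℝ),
      (∀ j, (j < n ∨ m ≤ j) → u j = 0) ∧ ‖u‖ ≤ 1 ∧ t - ε < ‖T u‖ := by
  obtain ⟨x, hx, hTx⟩ :=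
    (T.comp (tail n)).exists_lt_apply_of_lt_opNorm ((sub_lt_self t hε).trans_le (ht n))
  set y := tail n x
  have hlim : Tendsto (fun m => ‖T (y - tail m y)‖) atTop (𝓝 ‖T y‖) := by
    have := (tendsto_tail_atTop y).const_sub y
    rw [sub_zero] at this
    exact ((T.continuous.tendsto y).comp this).norm
  obtain ⟨m, hnm, hTm⟩ := ((eventually_gt_atTop n).and (hlim.eventually (lt_mem_nhds hTx))).exists
  refine ⟨m, hnm, y - tail m y, fun j hj => ?_, ?_, hTm⟩
  · rw [sub_tail_apply]
    rcases hj with hj | hj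
    · simp [y, tail_apply, hj]
    · simp [hj.not_gt]
  · exact (norm_sub_tail_le m y).trans ((norm_tail_apply_le n x).trans hx.le)

theorem exists_blocks_of_le_norm_comp_tail {T : C₀(ℕ, ℝ) →L[ℝ] X} {t ε : ℝ}
    (ht : ∀ k, t ≤ ‖T.comp (tail k)‖) (hε : 0 < ε) (n₀ : ℕ) :
    ∃ N : ℕ → ℕ, ∃ v : ℕ → C₀(ℕ, ℝ), StrictMono N ∧ N 0 = n₀ ∧
      (∀ k j, (j < N k ∨ N (k + 1) ≤ j) → v k j = 0) ∧ (∀ k, ‖v k‖ ≤ 1) ∧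
      ∀ k, t - ε < ‖T (v k)‖ := by
  choose m hm u hu using exists_block_of_le_norm_comp_tail ht hε
  let N : ℕ → ℕ := fun k => Nat.rec n₀ (fun _ Nk => m Nk) k
  exact ⟨N, fun k => u (N k), strictMono_nat_of_lt_succ fun k => hm (N k), rfl,
    fun k => (hu (N k)).1, fun k => (hu (N k)).2.1, fun k => (hu (N k)).2.2⟩

theorem iInf_norm_comp_tail_sub_le_SSZ (T : C₀(ℕ, ℝ) →L[ℝ] X) {ε : ℝ} (hε : 0 < ε) :
    (⨅ n, ‖T.comp (tail n)‖) - 3 * ε ≤ SSZ C₀(ℕ, ℝ) T := by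
  set t := ⨅ n, ‖T.comp (tail n)‖
  rcases le_or_gt (t - 3 * ε) 0 with hneg | hpos
  · exact hneg.trans (SSZ_nonneg T)
  have ht : ∀ k, t ≤ ‖T.comp (tail k)‖ :=
    ciInf_le ⟨0, by rintro _ ⟨n, rfl⟩; positivity⟩
  obtain ⟨n₀, hn₀⟩ := exists_lt_of_ciInf_lt (lt_add_of_pos_right t hε)
  obtain ⟨N, v, hN, hN0, hsupp, hv, hTv⟩ := exists_blocks_of_le_norm_comp_tail ht hε n₀
  set R := blockOp (blockIndex N) (tendsto_blockIndex hN) v hv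
  have hRsingle : ∀ k, R (single k) = v k := blockOp_single fun k j hjk =>
    hsupp k j (by by_contra! h; exact hjk (blockIndex_eq hN h.1 h.2))
  have hRtail : (tail n₀).comp R = R := by
    ext a j
    rw [ContinuousLinearMap.comp_apply, tail_apply]
    split_ifs with hj
    · rw [blockOp_apply, hsupp _ j (Or.inl ?_), mul_zero]
      exact hN0 ▸ hj |>.trans_le (hN.monotone (Nat.zero_le _))
    · rfl
  have hTR : ‖T.comp R‖ ≤ t + ε :=
    calc ‖T.comp R‖ = ‖(T.comp (tail n₀)).comp R‖ := by rw [ContinuousLinearMap.comp_assoc, hRtail]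
      _ ≤ ‖T.comp (tail n₀)‖ * ‖R‖ := ContinuousLinearMap.opNorm_comp_le _ _
      _ ≤ t + ε :=
        (mul_le_of_le_one_right (norm_nonneg (T.comp (tail n₀))) norm_blockOp_le).trans hn₀.le
  refine le_SSZ_of_norm_le_one R norm_blockOp_le hpos fun a => ?_
  have := le_norm_apply_of_le_norm_single (T.comp R) (α := t - ε) (by linarith)
    (fun k => by simpa [hRsingle] using (hTv k).le) hTR a
  rw [ContinuousLinearMap.comp_apply] at this
  linarith

theorem chiOp_adjOp_le_SSZ (T : C₀(ℕ, ℝ) →L[ℝ] X) : chiOp (adjOp T) ≤ SSZ C₀(ℕ, ℝ) T := by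
  have hchi : chiOp (adjOp T) ≤ ⨅ n, ‖T.comp (tail n)‖ :=
    le_ciInf (chiOp_adjOp_le_norm_comp_tail T)
  have hSSZ : ⨅ n, ‖T.comp (tail n)‖ ≤ SSZ C₀(ℕ, ℝ) T :=
    le_of_forall_pos_le_add fun ρ hρ => by
      linarith [iInf_norm_comp_tail_sub_le_SSZ T (ε := ρ / 3) (by positivity)]
  exact hchi.trans hSSZ

end Operator

end

theorem stmt3_general {X : Type*} [NormedAddCommGroup X] [NormedSpace ℝ X] (T : ZeroAtInftyContinuousMap ℕ ℝ →L[ℝ] X) :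
    chiOp (adjOp T) ≤ 2 * SSZ (ZeroAtInftyContinuousMap ℕ ℝ) T := by
  linarith [chiOp_adjOp_le_SSZ T, SSZ_nonneg (Z := C₀(ℕ, ℝ)) T]

theorem stmt3 {X : Type*} [NormedAddCommGroup X] [NormedSpace ℝ X] [CompleteSpace X] (T : ZeroAtInftyContinuousMap ℕ ℝ →L[ℝ] X) :
    chiOp (adjOp T) ≤ 2 * SSZ (ZeroAtInftyContinuousMap ℕ ℝ) T :=
  stmt3_general T
end

section
/- For any bounded operator T: X → Y between Banach spaces, SCS(T) ≤ 2χ(T*), where SCS(T) = sup{ δ(Q_N T) : N infinite-codimensional closed subspace of Y with Q_N T surjective } and δ(S) = sup{δ > 0 : δ·B_{Y/N} ⊆ S(B_X)} for a surjective operator S. -/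
open NormedSpace Metric Set Filter
open scoped ENNReal

/-! If `d • B ⊆ Q_N T (B_X)`, then `T*` is bounded below by `d` on `(Y/N)* ≅ N^⊥`, which is
infinite-dimensional, and `T*` maps the unit ball of `(Y/N)*` into `T* (B_{Y*})`. The unit ball of
an infinite-dimensional space carries an almost `1`-separated sequence (Riesz), so any finite
`r`-net of `T* (B_{Y*})` has a centre serving two of its points `g, g'`; then
`d ≤ d ‖g - g'‖ ≤ ‖T* g - T* g'‖ ≤ 2r`. -/

open scoped Topology

section hchi

variable {F : Type*} [SeminormedAddCommGroup F] {A : Set F}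

lemma hchi_nonneg (hA : A.Nonempty) : 0 ≤ hchi A := by
  refine Real.sInf_nonneg ?_
  rintro r ⟨C, hC⟩
  obtain ⟨c, -, hc⟩ := hC hA.some hA.some_mem
  exact dist_nonneg.trans hc

lemma le_hchi (hA : Bornology.IsBounded A) {b : ℝ}
    (h : ∀ (r : ℝ) (C : Finset F), (∀ a ∈ A, ∃ c ∈ C, dist a c ≤ r) → b ≤ r) : b ≤ hchi A := by
  obtain ⟨R, hR⟩ := hA.subset_closedBall 0
  refine le_csInf ⟨R, {0}, fun a ha => ⟨0, Finset.mem_singleton_self 0, hR ha⟩⟩ ?_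
  rintro r ⟨C, hC⟩
  exact h r C hC

end hchi

lemma not_finiteDimensional_strongDual {𝕜 E : Type*} [RCLike 𝕜] [NormedAddCommGroup E]
    [NormedSpace 𝕜 E] (hE : ¬ FiniteDimensional 𝕜 E) : ¬ FiniteDimensional 𝕜 (StrongDual 𝕜 E) :=
  fun _ => hE <| .of_injective (inclusionInDoubleDualLi 𝕜 (E := E)).toLinearMap
    (inclusionInDoubleDualLi 𝕜).injective

section separated

variable {E F : Type*} [NormedAddCommGroup E] [NormedSpace ℝ E] [SeminormedAddCommGroup F]

lemma exists_seq_norm_le_one_le_norm_sub_of_lt_one (hE : ¬ FiniteDimensional ℝ E) {t : ℝ}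
    (ht0 : 0 < t) (ht1 : t < 1) :
    ∃ g : ℕ → E, (∀ n, ‖g n‖ ≤ 1) ∧ Pairwise fun m n => t ≤ ‖g m - g n‖ := by
  have hc : 1 < ‖(1 + t⁻¹) / 2‖ := by
    rw [Real.norm_of_nonneg (by positivity)]
    linarith [one_lt_inv₀ ht0 |>.2 ht1]
  have hR : ‖(1 + t⁻¹) / 2‖ < t⁻¹ := by
    rw [Real.norm_of_nonneg (by positivity)]
    linarith [one_lt_inv₀ ht0 |>.2 ht1]
  obtain ⟨f, hfR, hf⟩ := exists_seq_norm_le_one_le_norm_sub' hc hR hE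
  refine ⟨fun n => t • f n, fun n => ?_, fun m n hmn => ?_⟩
  · rw [norm_smul, Real.norm_of_nonneg ht0.le]
    calc t * ‖f n‖ ≤ t * t⁻¹ := by gcongr; exact hfR n
      _ = 1 := mul_inv_cancel₀ ht0.ne'
  · show t ≤ ‖t • f m - t • f n‖
    rw [← smul_sub, norm_smul, Real.norm_of_nonneg ht0.le]
    exact le_mul_of_one_le_right ht0.le (hf hmn)

lemma le_two_mul_of_closedBall_covered (hE : ¬ FiniteDimensional ℝ E) (S : E →+ F) {d r : ℝ}
    (hd : 0 ≤ d) (hS : ∀ g, d * ‖g‖ ≤ ‖S g‖) (C : Finset F)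
    (hC : ∀ g : E, ‖g‖ ≤ 1 → ∃ c ∈ C, dist (S g) c ≤ r) : d ≤ 2 * r := by
  have key : ∀ t ∈ Ioo (0 : ℝ) 1, d * t ≤ 2 * r := by
    rintro t ⟨ht0, ht1⟩
    obtain ⟨g, hg1, hgsep⟩ := exists_seq_norm_le_one_le_norm_sub_of_lt_one hE ht0 ht1
    choose c hcC hc using fun n => hC (g n) (hg1 n)
    obtain ⟨m, n, hmn, hcmn⟩ :=
      Finite.exists_ne_map_eq_of_infinite fun n => (⟨c n, hcC n⟩ : C)
    have hcmn : c m = c n := congrArg Subtype.val hcmn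
    calc d * t ≤ d * ‖g m - g n‖ := mul_le_mul_of_nonneg_left (hgsep hmn) hd
      _ ≤ ‖S (g m) - S (g n)‖ := by simpa only [map_sub] using hS (g m - g n)
      _ ≤ dist (S (g m)) (c m) + dist (S (g n)) (c n) := by
          rw [← dist_eq_norm, hcmn]; exact dist_triangle_right _ _ _
      _ ≤ 2 * r := by linarith [hc m, hc n]
  have hlim : Tendsto (fun t => d * t) (𝓝[<] 1) (𝓝 d) := by
    simpa using ((continuous_const_mul d).tendsto 1).mono_left nhdsWithin_le_nhds
  exact le_of_tendsto hlim (eventually_of_mem (Ioo_mem_nhdsLT zero_lt_one) key)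

lemma le_two_mul_hchi (hE : ¬ FiniteDimensional ℝ E) (S : E →+ F) {d : ℝ} (hd : 0 ≤ d)
    (hS : ∀ g, d * ‖g‖ ≤ ‖S g‖) {A : Set F} (hA : Bornology.IsBounded A)
    (hSA : ∀ g : E, ‖g‖ ≤ 1 → S g ∈ A) : d ≤ 2 * hchi A := by
  suffices d / 2 ≤ hchi A by linarith
  refine le_hchi hA fun r C hC => ?_
  have := le_two_mul_of_closedBall_covered hE S hd hS C fun g hg => hC _ (hSA g hg)
  linarith

end separated

lemma mul_norm_le_norm_adjOp {X W : Type*} [NormedAddCommGroup X] [NormedSpace ℝ X]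
    [NormedAddCommGroup W] [NormedSpace ℝ W] (S : X →L[ℝ] W) {d : ℝ} (hd : 0 < d)
    (hS : ∀ w : W, ‖w‖ ≤ d → ∃ x : X, ‖x‖ ≤ 1 ∧ S x = w) (g : StrongDual ℝ W) :
    d * ‖g‖ ≤ ‖adjOp S g‖ := by
  rw [mul_comm, ← le_div_iff₀ hd]
  refine g.opNorm_bound_of_ball_bound hd _ fun w hw => ?_
  obtain ⟨x, hx, rfl⟩ := hS w (mem_closedBall_zero_iff.1 hw)
  exact (adjOp S g).le_of_opNorm_le_of_le le_rfl hx |>.trans_eq (mul_one _)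

lemma le_two_mul_chiOp_adjOp {X Y : Type*} [NormedAddCommGroup X] [NormedSpace ℝ X]
    [NormedAddCommGroup Y] [NormedSpace ℝ Y] (T : X →L[ℝ] Y) {N : Submodule ℝ Y}
    (hN : IsClosed (N : Set Y)) (hNfin : ¬ FiniteDimensional ℝ (Y ⧸ N)) {d : ℝ} (hd : 0 < d)
    (hTN : ∀ w : Y ⧸ N, ‖w‖ ≤ d → ∃ x : X, ‖x‖ ≤ 1 ∧ Submodule.Quotient.mk (T x) = w) :
    d ≤ 2 * chiOp (adjOp T) := by
  have hQ : ‖N.mkQL‖ ≤ 1 := N.mkQL.opNorm_le_bound zero_le_one fun y =>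
    (Submodule.Quotient.norm_mk_le N y).trans_eq (one_mul _).symm
  refine le_two_mul_hchi (not_finiteDimensional_strongDual hNfin)
    (adjOp (N.mkQL.comp T)).toLinearMap.toAddMonoidHom hd.le (mul_norm_le_norm_adjOp _ hd hTN)
    ((adjOp T).lipschitz.isBounded_image isBounded_closedBall) fun g hg => ⟨adjOp N.mkQL g, ?_, rfl⟩
  rw [mem_closedBall_zero_iff]
  calc ‖adjOp N.mkQL g‖ ≤ ‖g‖ * ‖N.mkQL‖ := g.opNorm_comp_le _
    _ ≤ 1 * 1 := by gcongr
    _ = 1 := one_mul 1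

theorem stmt5_general {X Y : Type*} [NormedAddCommGroup X] [NormedSpace ℝ X]
    [NormedAddCommGroup Y] [NormedSpace ℝ Y] (T : X →L[ℝ] Y) :
    SCS T ≤ 2 * chiOp (adjOp T) := by
  have hχ : 0 ≤ 2 * chiOp (adjOp T) :=
    mul_nonneg zero_le_two (hchi_nonneg ((nonempty_closedBall.2 zero_le_one).image _))
  refine Real.sSup_le ?_ hχ
  rintro _ ⟨N, hN, hNfin, -, rfl⟩
  refine Real.sSup_le ?_ hχ
  rintro d ⟨hd, hTN⟩
  exact le_two_mul_chiOp_adjOp T hN hNfin hd hTN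

theorem stmt5 {X Y : Type*} [NormedAddCommGroup X] [NormedSpace ℝ X] [CompleteSpace X]
    [NormedAddCommGroup Y] [NormedSpace ℝ Y] [CompleteSpace Y] (T : X →L[ℝ] Y) :
    SCS T ≤ 2 * chiOp (adjOp T) :=
  stmt5_general T
end

section
/- For any bounded operator T: X → Y between Banach spaces, SCS(T) ≤ SS(T*), where SCS(T) = sup{δ(Q_N T) : N infinite-codimensional closed subspace of Y with Q_N T surjective} and SS(T*) = sup over infinite-dimensional closed subspaces M of Y* of inf{‖T*y*‖ : y* ∈ M, ‖y*‖ = 1}. -/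
open NormedSpace Metric Set Filter
open scoped ENNReal

/-
If `Q_N T` maps the unit ball onto a ball of radius `δ` in `Y ⧸ N`, then every functional `f`
vanishing on `N` satisfies `δ ‖f‖ ≤ ‖T* f‖`: pulling `δ y` back through `Q_N T` gives
`δ f y = (T* f) x` with `‖x‖ ≤ 1`. The annihilator of `N` is a closed subspace of `Y*`, infinite
dimensional because it contains an injective image of `(Y ⧸ N)*`, so it witnesses `δ ≤ SS(T*)`.
-/

open Function

section

variable {X Y : Type*} [NormedAddCommGroup X] [NormedSpace ℝ X]
  [NormedAddCommGroup Y] [NormedSpace ℝ Y]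

lemma SS_nonneg (U : X →L[ℝ] Y) : 0 ≤ SS U :=
  Real.sSup_nonneg <| by
    rintro c ⟨M, -, -, rfl⟩
    exact Real.sInf_nonneg <| by rintro r ⟨x, -, -, rfl⟩; positivity

lemma Submodule.exists_norm_eq_one_of_not_finiteDimensional {M : Submodule ℝ X}
    (hM : ¬ FiniteDimensional ℝ M) : ∃ x ∈ M, ‖x‖ = 1 := by
  have : Nontrivial M := by
    by_contra h
    rw [not_nontrivial_iff_subsingleton] at h
    exact hM inferInstance
  obtain ⟨x, hx⟩ := exists_norm_eq M zero_le_one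
  exact ⟨x, x.2, hx⟩

lemma le_SS (U : X →L[ℝ] Y) {M : Submodule ℝ X} (hMc : IsClosed (M : Set X))
    (hM : ¬ FiniteDimensional ℝ M) {c : ℝ} (hc : ∀ x ∈ M, ‖x‖ = 1 → c ≤ ‖U x‖) :
    c ≤ SS U := by
  have hbdd : BddAbove { c : ℝ | ∃ M : Submodule ℝ X, IsClosed (M : Set X) ∧
      ¬ FiniteDimensional ℝ M ∧ c = sInf { r : ℝ | ∃ x ∈ M, ‖x‖ = 1 ∧ r = ‖U x‖ } } := by
    refine ⟨‖U‖, ?_⟩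
    rintro c ⟨M, -, hM, rfl⟩
    obtain ⟨x, hxM, hx⟩ := Submodule.exists_norm_eq_one_of_not_finiteDimensional hM
    refine csInf_le_of_le ⟨0, ?_⟩ ⟨x, hxM, hx, rfl⟩ ?_
    · rintro r ⟨y, -, -, rfl⟩; positivity
    · simpa [hx] using U.le_opNorm x
  obtain ⟨x, hxM, hx⟩ := Submodule.exists_norm_eq_one_of_not_finiteDimensional hM
  refine le_trans ?_ (le_csSup hbdd ⟨M, hMc, hM, rfl⟩)
  refine le_csInf ⟨_, x, hxM, hx, rfl⟩ ?_
  rintro r ⟨y, hyM, hy, rfl⟩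
  exact hc y hyM hy

lemma isClosed_annih (N : Submodule ℝ Y) : IsClosed (annih N : Set (StrongDual ℝ Y)) := by
  have : (annih N : Set (StrongDual ℝ Y)) = ⋂ y ∈ N, {f : StrongDual ℝ Y | f y = 0} := by
    ext f; simp [annih]
  rw [this]
  exact isClosed_biInter fun y _ =>
    isClosed_eq (ContinuousLinearMap.apply ℝ ℝ y).continuous continuous_const

lemma adjOp_injective {S : X →L[ℝ] Y} (hS : Surjective S) : Injective (adjOp S) := by
  intro f g hfg
  ext y
  obtain ⟨x, rfl⟩ := hS y
  exact congrArg (fun h : StrongDual ℝ X => h x) hfg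

lemma adjOp_mkQL_mem_annih (N : Submodule ℝ Y) [IsClosed (N : Set Y)]
    (g : StrongDual ℝ (Y ⧸ N)) : adjOp N.mkQL g ∈ annih N := by
  intro y hy
  show g (N.mkQ y) = 0
  rw [N.mkQ_apply, (Submodule.Quotient.mk_eq_zero N).2 hy, map_zero]

lemma FiniteDimensional.of_strongDual {R V : Type*} [Field R] [TopologicalSpace R]
    [IsTopologicalRing R] [AddCommGroup V] [TopologicalSpace V] [Module R V]
    [SeparatingDual R V] [FiniteDimensional R (StrongDual R V)] : FiniteDimensional R V :=
  FiniteDimensional.of_injective _ (separatingDual_iff_injective.mp ‹_›)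

lemma not_finiteDimensional_annih {N : Submodule ℝ Y} (hNc : IsClosed (N : Set Y))
    (hN : ¬ FiniteDimensional ℝ (Y ⧸ N)) : ¬ FiniteDimensional ℝ (annih N) := by
  have : IsClosed (N : Set Y) := hNc
  intro hfin
  let ι : StrongDual ℝ (Y ⧸ N) →ₗ[ℝ] annih N :=
    LinearMap.codRestrict (annih N) (adjOp N.mkQL).toLinearMap (adjOp_mkQL_mem_annih N)
  have hι : Injective ι := fun f g hfg =>
    adjOp_injective (S := N.mkQL) N.mkQ_surjective (congrArg Subtype.val hfg)
  have : FiniteDimensional ℝ (StrongDual ℝ (Y ⧸ N)) :=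
    FiniteDimensional.of_injective (V₂ := annih N) ι hι
  exact hN FiniteDimensional.of_strongDual

lemma mul_norm_le_norm_adjOp_of_mem_annih (T : X →L[ℝ] Y) {N : Submodule ℝ Y} {d : ℝ}
    (hd0 : 0 < d)
    (hd : ∀ w : Y ⧸ N, ‖w‖ ≤ d → ∃ x : X, ‖x‖ ≤ 1 ∧ (Submodule.Quotient.mk (T x) : Y ⧸ N) = w)
    {f : StrongDual ℝ Y} (hf : f ∈ annih N) : d * ‖f‖ ≤ ‖adjOp T f‖ := by
  rw [mul_comm, ← le_div_iff₀ hd0]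
  refine ContinuousLinearMap.opNorm_le_of_unit_norm (by positivity) fun y hy => ?_
  have hw : ‖(Submodule.Quotient.mk (d • y) : Y ⧸ N)‖ ≤ d := by
    simpa [norm_smul, hy, abs_of_pos hd0] using Submodule.Quotient.norm_mk_le N (d • y)
  obtain ⟨x, hx, hTx⟩ := hd _ hw
  have hfx : adjOp T f x = d * f y := by
    have := hf _ ((Submodule.Quotient.eq N).1 hTx)
    rw [map_sub, map_smul, sub_eq_zero] at this
    exact this
  calc ‖f y‖ = ‖adjOp T f x‖ / d := by
        rw [hfx, norm_mul, Real.norm_of_nonneg hd0.le]; field_simp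
    _ ≤ ‖adjOp T f‖ / d := by gcongr; exact (adjOp T f).unit_le_opNorm x hx

end

theorem stmt6_general {X Y : Type*} [NormedAddCommGroup X] [NormedSpace ℝ X]
    [NormedAddCommGroup Y] [NormedSpace ℝ Y] (T : X →L[ℝ] Y) :
    SCS T ≤ SS (adjOp T) := by
  refine Real.sSup_le ?_ (SS_nonneg _)
  rintro r ⟨N, hNc, hN, -, rfl⟩
  refine Real.sSup_le ?_ (SS_nonneg _)
  rintro d ⟨hd0, hd⟩
  refine le_SS _ (isClosed_annih N) (not_finiteDimensional_annih hNc hN) fun f hf hf1 => ?_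
  simpa [hf1] using mul_norm_le_norm_adjOp_of_mem_annih T hd0 hd hf

theorem stmt6 {X Y : Type*} [NormedAddCommGroup X] [NormedSpace ℝ X] [CompleteSpace X]
    [NormedAddCommGroup Y] [NormedSpace ℝ Y] [CompleteSpace Y] (T : X →L[ℝ] Y) :
    SCS T ≤ SS (adjOp T) :=
  stmt6_general T
end

section
/- For bounded operators T: X → Y between Banach spaces, SCS_{ℓ₁}(T) ≤ SS_{c₀}(T*), where SCS_{ℓ₁}(T) = sup{δ(ST)/‖S‖ : S: Y → ℓ₁ bounded with ST surjective} and SS_{c₀}(T*) = sup{(‖V‖·‖(T*V)^{-1}‖)^{-1} : V: c₀ → Y* bounded with T*V an isomorphism onto its range}. -/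
open NormedSpace Metric Set Filter
open scoped ENNReal

instance : Fact ((1:ℝ≥0∞) ≤ 1) := ⟨le_rfl⟩

/-!
If `d • B_{ℓ₁} ⊆ ST(B_X)`, then every functional `f` on `ℓ₁` satisfies
`d ‖f‖ ≤ ‖f ∘ S ∘ T‖ = ‖T* S* f‖`. Since `c₀` embeds isometrically into `ℓ∞ = ℓ₁*`, the operator
`V = S* ∘ (c₀ ↪ ℓ₁*) : c₀ → Y*` has `‖V‖ ≤ ‖S‖` and `d ‖z‖ ≤ ‖T* V z‖`, hence
`d / ‖S‖ ≤ d / ‖V‖ ≤ SS_{c₀}(T*)`.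
-/

open scoped ZeroAtInfty

section OperatorBounds

variable {X W F : Type*} [NormedAddCommGroup X] [NormedSpace ℝ X]
  [NormedAddCommGroup W] [NormedSpace ℝ W] [NormedAddCommGroup F] [NormedSpace ℝ F]

theorem ContinuousLinearMap.mul_norm_le_norm_comp_of_covers {A : X →L[ℝ] W} {d : ℝ} (hd : 0 < d)
    (hA : ∀ w : W, ‖w‖ ≤ d → ∃ x : X, ‖x‖ ≤ 1 ∧ A x = w) (f : W →L[ℝ] F) :
    d * ‖f‖ ≤ ‖f.comp A‖ := by
  rw [mul_comm, ← le_div_iff₀ hd]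
  refine f.opNorm_le_of_unit_norm (by positivity) fun w hw => ?_
  obtain ⟨x, hx, hxw⟩ := hA (d • w) (by simp [norm_smul, hw, abs_of_pos hd])
  rw [le_div_iff₀ hd]
  calc ‖f w‖ * d = ‖f (A x)‖ := by simp [hxw, norm_smul, abs_of_pos hd, mul_comm]
    _ ≤ ‖f.comp A‖ := (f.comp A).le_of_opNorm_le_of_le le_rfl hx |>.trans_eq (mul_one _)

theorem le_opNorm_mul_opNorm_of_mul_norm_le {Z : Type*} [NormedAddCommGroup Z] [NormedSpace ℝ Z]
    (U : W →L[ℝ] F) (R : Z →L[ℝ] W) {c : ℝ} {z : Z} (hz : z ≠ 0) (h : c * ‖z‖ ≤ ‖U (R z)‖) :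
    c ≤ ‖U‖ * ‖R‖ := by
  refine le_of_mul_le_mul_right ?_ (norm_pos_iff.mpr hz)
  calc c * ‖z‖ ≤ ‖U (R z)‖ := h
    _ ≤ ‖U‖ * (‖R‖ * ‖z‖) := U.le_of_opNorm_le_of_le le_rfl (R.le_opNorm z)
    _ = ‖U‖ * ‖R‖ * ‖z‖ := (mul_assoc _ _ _).symm

end OperatorBounds

section Moduli

variable {X Y Z : Type*} [NormedAddCommGroup X] [NormedSpace ℝ X]
  [NormedAddCommGroup Y] [NormedSpace ℝ Y] [NormedAddCommGroup Z] [NormedSpace ℝ Z]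

theorem SSZ_nonneg_s10 (U : X →L[ℝ] Y) : 0 ≤ SSZ Z U :=
  Real.sSup_nonneg fun _ ⟨_, _, hc, _, hr⟩ => hr ▸ by positivity

theorem le_SSZ_mul_opNorm [Nontrivial Z] (U : X →L[ℝ] Y) (R : Z →L[ℝ] X) {c : ℝ} (hc : 0 < c)
    (h : ∀ z, c * ‖z‖ ≤ ‖U (R z)‖) : c ≤ SSZ Z U * ‖R‖ := by
  obtain ⟨z, hz⟩ := exists_ne (0 : Z)
  have hR : 0 < ‖R‖ := by
    by_contra! hR
    have := le_opNorm_mul_opNorm_of_mul_norm_le U R hz (h z)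
    nlinarith [norm_nonneg U, norm_nonneg R]
  have hbdd : BddAbove {r : ℝ | ∃ R : Z →L[ℝ] X, ∃ c : ℝ, 0 < c ∧
      (∀ z, c * ‖z‖ ≤ ‖U (R z)‖) ∧ r = c / ‖R‖} := by
    refine ⟨‖U‖, ?_⟩
    rintro _ ⟨R', c', -, h', rfl⟩
    rcases (norm_nonneg R').eq_or_lt with hR' | hR'
    · simp [← hR']
    rw [div_le_iff₀ hR']
    exact le_opNorm_mul_opNorm_of_mul_norm_le U R' hz (h' z)
  rw [← div_le_iff₀ hR]
  exact le_csSup hbdd ⟨R, c, hc, h, rfl⟩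

theorem SCSZ_le_of_forall_le_mul_opNorm (T : X →L[ℝ] Y) {s : ℝ} (hs : 0 ≤ s)
    (h : ∀ (S : Y →L[ℝ] Z) (d : ℝ), 0 < d →
      (∀ w : Z, ‖w‖ ≤ d → ∃ x : X, ‖x‖ ≤ 1 ∧ S (T x) = w) → d ≤ s * ‖S‖) :
    SCSZ Z T ≤ s := by
  refine Real.sSup_le ?_ hs
  rintro _ ⟨S, -, rfl⟩
  refine div_le_of_le_mul₀ (norm_nonneg S) hs (Real.sSup_le ?_ (by positivity))
  rintro d ⟨hd, hcover⟩
  exact h S d hd hcover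

theorem adjOp_apply (T : X →L[ℝ] Y) (f : StrongDual ℝ Y) : adjOp T f = f.comp T := rfl

theorem norm_adjOp_le (T : X →L[ℝ] Y) : ‖adjOp T‖ ≤ ‖T‖ :=
  ContinuousLinearMap.opNorm_le_bound _ (norm_nonneg T) fun f => by
    rw [adjOp_apply, mul_comm]
    exact f.opNorm_comp_le T

end Moduli

noncomputable section SequenceSpaces

variable (α : Type*)

def lpInftyToDualLpOne : lp (fun _ : α ↦ ℝ) ∞ →L[ℝ] StrongDual ℝ (lp (fun _ : α ↦ ℝ) 1) :=
  lp.dualPairing ∞ 1 (fun _ ↦ ContinuousLinearMap.mul ℝ ℝ) (K := 1)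
    fun _ ↦ (ContinuousLinearMap.opNorm_mul_le ℝ ℝ).trans_eq NNReal.coe_one.symm

variable {α}

theorem norm_lpInftyToDualLpOne_le : ‖lpInftyToDualLpOne α‖ ≤ 1 :=
  lp.norm_dualPairing ..

theorem lpInftyToDualLpOne_apply (e : lp (fun _ : α ↦ ℝ) ∞) (w : lp (fun _ : α ↦ ℝ) 1) :
    lpInftyToDualLpOne α e w = ∑' i, e i * w i :=
  rfl

theorem lpInftyToDualLpOne_apply_single [DecidableEq α] (e : lp (fun _ : α ↦ ℝ) ∞) (i : α) :
    lpInftyToDualLpOne α e (lp.single 1 i 1) = e i := by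
  rw [lpInftyToDualLpOne_apply, tsum_eq_single i]
  · simp
  · intro j hj
    simp [Pi.single_eq_of_ne hj]

theorem norm_le_norm_lpInftyToDualLpOne (e : lp (fun _ : α ↦ ℝ) ∞) :
    ‖e‖ ≤ ‖lpInftyToDualLpOne α e‖ := by
  classical
  refine lp.norm_le_of_forall_le (norm_nonneg _) fun i => ?_
  calc ‖e i‖ = ‖lpInftyToDualLpOne α e (lp.single 1 i 1)‖ := by
        rw [lpInftyToDualLpOne_apply_single]
    _ ≤ ‖lpInftyToDualLpOne α e‖ * ‖(lp.single 1 i 1 : lp (fun _ : α ↦ ℝ) 1)‖ :=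
        ContinuousLinearMap.le_opNorm _ _
    _ = ‖lpInftyToDualLpOne α e‖ := by rw [lp.norm_single (by norm_num), norm_one, mul_one]

variable [TopologicalSpace α] [DiscreteTopology α]

def ZeroAtInftyContinuousMap.toLpInfty : C₀(α, ℝ) →ₗᵢ[ℝ] lp (fun _ : α ↦ ℝ) ∞ where
  toFun f := (lpBCFₗᵢ ℝ ℝ).symm f.toBCF
  map_add' f g := by exact (lpBCFₗᵢ ℝ ℝ).symm.map_add f.toBCF g.toBCF
  map_smul' c f := by exact (lpBCFₗᵢ ℝ ℝ).symm.map_smul c f.toBCF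
  norm_map' f := by exact ((lpBCFₗᵢ ℝ ℝ).symm.norm_map f.toBCF).trans f.norm_toBCF_eq_norm

def ZeroAtInftyContinuousMap.toDualLpOne : C₀(α, ℝ) →L[ℝ] StrongDual ℝ (lp (fun _ : α ↦ ℝ) 1) :=
  (lpInftyToDualLpOne α).comp toLpInfty.toContinuousLinearMap

theorem ZeroAtInftyContinuousMap.norm_toDualLpOne_le :
    ‖(toDualLpOne : C₀(α, ℝ) →L[ℝ] StrongDual ℝ (lp (fun _ : α ↦ ℝ) 1))‖ ≤ 1 :=
  calc ‖(toDualLpOne : C₀(α, ℝ) →L[ℝ] _)‖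
      ≤ ‖lpInftyToDualLpOne α‖ * ‖(toLpInfty : C₀(α, ℝ) →ₗᵢ[ℝ] _).toContinuousLinearMap‖ :=
        ContinuousLinearMap.opNorm_comp_le _ _
    _ ≤ 1 * 1 := by
        gcongr
        exacts [norm_lpInftyToDualLpOne_le, LinearIsometry.norm_toContinuousLinearMap_le _]
    _ = 1 := one_mul 1

theorem ZeroAtInftyContinuousMap.norm_le_norm_toDualLpOne (z : C₀(α, ℝ)) :
    ‖z‖ ≤ ‖toDualLpOne z‖ :=
  (toLpInfty.norm_map z).symm.trans_le (norm_le_norm_lpInftyToDualLpOne _)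

instance [Nonempty α] : Nontrivial C₀(α, ℝ) := by
  classical
  inhabit α
  let δ : C₀(α, ℝ) :=
    { toFun := Pi.single default 1
      continuous_toFun := continuous_of_discreteTopology
      zero_at_infty' := by
        rw [cocompact_eq_cofinite]
        refine tendsto_const_nhds.congr' ?_
        filter_upwards [(Set.finite_singleton default).compl_mem_cofinite] with i hi
        simp [Pi.single_eq_of_ne hi] }
  exact ⟨δ, 0, fun h => by simpa [δ] using congr($h default)⟩

end SequenceSpaces

theorem stmt10_general {X Y : Type*} [NormedAddCommGroup X] [NormedSpace ℝ X]
    [NormedAddCommGroup Y] [NormedSpace ℝ Y] (T : X →L[ℝ] Y) :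
    SCSZ (lp (fun _ : ℕ => ℝ) 1) T ≤ SSZ (ZeroAtInftyContinuousMap ℕ ℝ) (adjOp T) := by
  refine SCSZ_le_of_forall_le_mul_opNorm T (SSZ_nonneg_s10 _) fun S d hd hcover => ?_
  let V := (adjOp S).comp ZeroAtInftyContinuousMap.toDualLpOne
  have hV : ‖V‖ ≤ ‖S‖ :=
    calc ‖V‖ ≤ ‖adjOp S‖ * ‖(ZeroAtInftyContinuousMap.toDualLpOne : C₀(ℕ, ℝ) →L[ℝ] _)‖ :=
          ContinuousLinearMap.opNorm_comp_le _ _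
      _ ≤ ‖S‖ * 1 := by gcongr; exacts [norm_adjOp_le S, ZeroAtInftyContinuousMap.norm_toDualLpOne_le]
      _ = ‖S‖ := mul_one _
  have hVbelow (z : C₀(ℕ, ℝ)) : d * ‖z‖ ≤ ‖adjOp T (V z)‖ :=
    calc d * ‖z‖ ≤ d * ‖z.toDualLpOne‖ := by gcongr; exact z.norm_le_norm_toDualLpOne
      _ ≤ ‖z.toDualLpOne.comp (S.comp T)‖ :=
          ContinuousLinearMap.mul_norm_le_norm_comp_of_covers hd hcover _
      _ = ‖adjOp T (V z)‖ := rfl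
  calc d ≤ SSZ C₀(ℕ, ℝ) (adjOp T) * ‖V‖ := le_SSZ_mul_opNorm _ V hd hVbelow
    _ ≤ SSZ C₀(ℕ, ℝ) (adjOp T) * ‖S‖ := by gcongr; exact SSZ_nonneg_s10 _

theorem stmt10 {X Y : Type*} [NormedAddCommGroup X] [NormedSpace ℝ X] [CompleteSpace X]
    [NormedAddCommGroup Y] [NormedSpace ℝ Y] [CompleteSpace Y] (T : X →L[ℝ] Y) :
    SCSZ (lp (fun _ : ℕ => ℝ) 1) T ≤ SSZ (ZeroAtInftyContinuousMap ℕ ℝ) (adjOp T) :=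
  stmt10_general T
end
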